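/- For any finite set P with |P| ≥ 3, there are only finitely many isomorphism classes of stable P-marked trees. -/
import Mathlib


/-- A `P`-marked tree: a finite tree on vertex set `Fin n` together with legs
labeled by `P`, each attached to a vertex via `mrk`. -/
structure PMTree (P : Type) where
  n : ℕ
  G : SimpleGraph (Fin n)
  tree : G.IsTree
  mrk : P → Fin n

/-- The valence of a vertex: number of incident edges plus number of attached legs. -/
noncomputable def PMTree.valence {P : Type} [Fintype P] (σ : PMTree P) (v : Fin σ.n) : ℕ :=
  (σ.G.neighborSet v).ncard + Set.ncard {p : P | σ.mrk p = v}

/-- A `P`-marked tree is stable if every vertex has valence at least 3. -/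
def PMTree.Stable {P : Type} [Fintype P] (σ : PMTree P) : Prop :=
  ∀ v : Fin σ.n, 3 ≤ σ.valence v

/-- Isomorphism of `P`-marked trees: a graph isomorphism preserving the leg labeling. -/
def PMTree.Iso {P : Type} (σ τ : PMTree P) : Prop :=
  ∃ φ : Fin σ.n ≃ Fin τ.n,
    (∀ u v : Fin σ.n, σ.G.Adj u v ↔ τ.G.Adj (φ u) (φ v)) ∧
    ∀ p : P, φ (σ.mrk p) = τ.mrk p

lemma aux_finite_sg (V : Type) [Finite V] : Finite (SimpleGraph V) :=
  Finite.of_injective (fun G => G.Adj) fun G H h => by ext u v; simp only at h; rw [h]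

lemma aux_bound {P : Type} [Fintype P] (σ : PMTree P) (hσ : σ.Stable) :
    σ.n ≤ Fintype.card P := by
  classical
  have hne : Nonempty (Fin σ.n) := σ.tree.isConnected.nonempty
  have hcard : σ.G.edgeFinset.card + 1 = σ.n := by
    simpa using σ.tree.card_edgeFinset
  have hdeg : ∑ v, σ.G.degree v = 2 * σ.G.edgeFinset.card :=
    σ.G.sum_degrees_eq_twice_card_edges
  have hlegs : ∑ v, Set.ncard {p : P | σ.mrk p = v} = Fintype.card P := by
    have h := Finset.card_eq_sum_card_fiberwise
      (f := σ.mrk) (s := Finset.univ) (t := Finset.univ) (fun x _ => Finset.mem_univ _)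
    rw [Fintype.card, h]
    refine Finset.sum_congr rfl fun v _ => ?_
    rw [Set.ncard_eq_toFinset_card']
    congr 1
    ext p
    simp
  have hval : ∀ v, σ.valence v = σ.G.degree v + Set.ncard {p : P | σ.mrk p = v} := by
    intro v
    rw [PMTree.valence, Set.ncard_eq_toFinset_card']
    rfl
  have h3 : 3 * σ.n ≤ ∑ v, σ.valence v := by
    calc 3 * σ.n = ∑ _v : Fin σ.n, 3 := by simp [mul_comm]
    _ ≤ ∑ v, σ.valence v := Finset.sum_le_sum fun v _ => hσ v
  have hsum : ∑ v, σ.valence v = 2 * σ.G.edgeFinset.card + Fintype.card P := by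
    rw [← hdeg, ← hlegs, ← Finset.sum_add_distrib]
    exact Finset.sum_congr rfl fun v _ => hval v
  omega

/-- For any finite set `P` with `|P| ≥ 3`, there are only finitely many isomorphism
classes of stable `P`-marked trees. -/
theorem stmt2 (P : Type) [Fintype P] (hP : 3 ≤ Fintype.card P) :
    ∃ L : List (PMTree P), ∀ σ : PMTree P, σ.Stable → ∃ τ ∈ L, σ.Iso τ := by
  classical
  set N := Fintype.card P with hN
  have : ∀ k : Fin (N + 1), Finite (SimpleGraph (Fin k.1)) := fun k => aux_finite_sg _
  haveI : Finite ((k : Fin (N + 1)) × (SimpleGraph (Fin k.1) × (P → Fin k.1))) := by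
    exact Finite.instSigma
  haveI : Fintype ((k : Fin (N + 1)) × (SimpleGraph (Fin k.1) × (P → Fin k.1))) :=
    Fintype.ofFinite _
  let f : ((k : Fin (N + 1)) × (SimpleGraph (Fin k.1) × (P → Fin k.1))) → Option (PMTree P) :=
    fun t => if h : t.2.1.IsTree then some ⟨t.1.1, t.2.1, h, t.2.2⟩ else none
  refine ⟨(Finset.univ.toList).filterMap f, fun σ hσ => ?_⟩
  have hn : σ.n ≤ N := aux_bound σ hσ
  refine ⟨⟨σ.n, σ.G, σ.tree, σ.mrk⟩, ?_, Equiv.refl _, fun u v => Iff.rfl, fun p => rfl⟩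
  rw [List.mem_filterMap]
  refine ⟨⟨⟨σ.n, Nat.lt_succ_of_le hn⟩, σ.G, σ.mrk⟩,
    Finset.mem_toList.2 (Finset.mem_univ _), ?_⟩
  exact dif_pos σ.tree
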